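/- Let c ∈ (0,1), L ≥ 1, and D₀ ≥ c√m ≥ 1. Then the set {x ∈ S^{m−1} : D_L(x) ∈ (D₀, 2D₀]} admits a β-net of cardinality at most (C D₀/√m)^m, where β = 2L√(log(2D₀))/D₀ and C depends only on c. The net can be taken to be {p/‖p‖₂ : p ∈ Z^m ∩ 4D₀ B₂^m, p ≠ 0}. -/

import Mathlib

open scoped ENNReal

/-- The Euclidean norm of a vector in `ℝᵐ`. -/
noncomputable def euclidNorm {m : ℕ} (v : Fin m → ℝ) : ℝ :=
  Real.sqrt (∑ i, (v i) ^ 2)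

/-- The Euclidean distance from a vector to the integer lattice `ℤᵐ`. -/
noncomputable def distToLattice {m : ℕ} (v : Fin m → ℝ) : ℝ :=
  sInf {r | ∃ p : Fin m → ℤ, r = euclidNorm (fun i => v i - (p i : ℝ))}

/-- The least common denominator (LCD) of `x` with parameter `L`:
`D_L(x) = inf {θ > 0 : dist(θx, ℤᵐ) < L √(log₊(θ/L))}`, valued in `[0,∞]`. -/
noncomputable def LCD {m : ℕ} (L : ℝ) (x : Fin m → ℝ) : ℝ≥0∞ :=
  sInf {θ : ℝ≥0∞ | ∃ t : ℝ, 0 < t ∧ θ = ENNReal.ofReal t ∧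
    distToLattice (t • x) < L * Real.sqrt (max (Real.log (t / L)) 0)}

section Helpers

lemma en_eq {m : ℕ} (v : Fin m → ℝ) :
    euclidNorm v = ‖(WithLp.equiv 2 (Fin m → ℝ)).symm v‖ := by
  rw [EuclideanSpace.norm_eq]
  simp [euclidNorm, sq_abs]

lemma en_nonneg {m : ℕ} (v : Fin m → ℝ) : 0 ≤ euclidNorm v := Real.sqrt_nonneg _

lemma en_add_le {m : ℕ} (a b : Fin m → ℝ) :
    euclidNorm (a + b) ≤ euclidNorm a + euclidNorm b := by
  simp only [en_eq]
  rw [show (WithLp.equiv 2 (Fin m → ℝ)).symm (a + b)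
      = (WithLp.equiv 2 (Fin m → ℝ)).symm a + (WithLp.equiv 2 (Fin m → ℝ)).symm b from rfl]
  exact norm_add_le _ _

lemma en_smul {m : ℕ} (t : ℝ) (v : Fin m → ℝ) :
    euclidNorm (t • v) = |t| * euclidNorm v := by
  simp only [en_eq]
  rw [show (WithLp.equiv 2 (Fin m → ℝ)).symm (t • v)
      = t • (WithLp.equiv 2 (Fin m → ℝ)).symm v from rfl]
  rw [norm_smul]; simp [Real.norm_eq_abs]

lemma en_neg {m : ℕ} (v : Fin m → ℝ) : euclidNorm (-v) = euclidNorm v := by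
  simp only [en_eq]
  rw [show (WithLp.equiv 2 (Fin m → ℝ)).symm (-v)
      = -(WithLp.equiv 2 (Fin m → ℝ)).symm v from rfl]
  exact norm_neg _

lemma abs_en_sub_en {m : ℕ} (a b : Fin m → ℝ) :
    |euclidNorm a - euclidNorm b| ≤ euclidNorm (a - b) := by
  simp only [en_eq]
  rw [show (WithLp.equiv 2 (Fin m → ℝ)).symm (a - b)
      = (WithLp.equiv 2 (Fin m → ℝ)).symm a - (WithLp.equiv 2 (Fin m → ℝ)).symm b from rfl]
  exact abs_norm_sub_norm_le _ _

lemma abs_coord_le {m : ℕ} (v : Fin m → ℝ) (i : Fin m) : |v i| ≤ euclidNorm v := by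
  rw [euclidNorm, ← Real.sqrt_sq_eq_abs (v i)]
  apply Real.sqrt_le_sqrt
  exact Finset.single_le_sum (f := fun j => (v j)^2) (fun j _ => sq_nonneg _) (Finset.mem_univ i)

lemma tail_lemma (lam : ℝ) (hlam : 0 < lam) (K₀ : ℕ) (hK₀ : 1 ≤ K₀) (n : ℕ) :
    ∑ k ∈ Finset.Icc 1 n, (1 + lam * (k:ℝ)^2)⁻¹ ≤ K₀ + 1/(lam * K₀) := by
  have hnonneg : ∀ k : ℕ, 0 ≤ (1 + lam * (k:ℝ)^2)⁻¹ := fun k => by positivity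
  have hK₀R : (0:ℝ) < K₀ := by exact_mod_cast hK₀
  have hsub : Finset.Icc 1 n ⊆ (Finset.Icc 1 n ∩ Finset.Icc 1 K₀) ∪ Finset.Icc (K₀+1) n := by
    intro k hk
    simp only [Finset.mem_Icc, Finset.mem_union, Finset.mem_inter] at *
    omega
  calc ∑ k ∈ Finset.Icc 1 n, (1 + lam * (k:ℝ)^2)⁻¹
      ≤ ∑ k ∈ (Finset.Icc 1 n ∩ Finset.Icc 1 K₀) ∪ Finset.Icc (K₀+1) n,
          (1 + lam * (k:ℝ)^2)⁻¹ :=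
        Finset.sum_le_sum_of_subset_of_nonneg hsub (fun k _ _ => hnonneg k)
    _ ≤ (∑ k ∈ Finset.Icc 1 n ∩ Finset.Icc 1 K₀, (1 + lam * (k:ℝ)^2)⁻¹)
        + ∑ k ∈ Finset.Icc (K₀+1) n, (1 + lam * (k:ℝ)^2)⁻¹ :=
        by
          have hui := Finset.sum_union_inter (s₁ := Finset.Icc 1 n ∩ Finset.Icc 1 K₀)
            (s₂ := Finset.Icc (K₀+1) n) (f := fun k => (1 + lam * (k:ℝ)^2)⁻¹)
          have hnn : 0 ≤ ∑ k ∈ (Finset.Icc 1 n ∩ Finset.Icc 1 K₀) ∩ Finset.Icc (K₀+1) n,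
              (1 + lam * (k:ℝ)^2)⁻¹ := Finset.sum_nonneg fun k _ => hnonneg k
          linarith
    _ ≤ K₀ + 1/(lam * K₀) := by
        gcongr
        · calc ∑ k ∈ Finset.Icc 1 n ∩ Finset.Icc 1 K₀, (1 + lam * (k:ℝ)^2)⁻¹
              ≤ ∑ _k ∈ Finset.Icc 1 n ∩ Finset.Icc 1 K₀, (1:ℝ) := by
                apply Finset.sum_le_sum
                intro k _
                rw [inv_le_one_iff₀]
                right
                nlinarith [sq_nonneg (k:ℝ), hlam.le]
            _ ≤ K₀ := by
                rw [Finset.sum_const, nsmul_eq_mul, mul_one]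
                have h1 : (Finset.Icc 1 n ∩ Finset.Icc 1 K₀).card ≤ (Finset.Icc 1 K₀).card :=
                  Finset.card_le_card Finset.inter_subset_right
                have h2 : (Finset.Icc 1 K₀).card = K₀ := by rw [Nat.card_Icc]; omega
                exact_mod_cast h1.trans_eq h2
        · have hterm : ∀ k ∈ Finset.Icc (K₀+1) n,
              (1 + lam * (k:ℝ)^2)⁻¹ ≤ (1/lam) * (1/((k:ℝ)-1) - 1/(k:ℝ)) := by
            intro k hk
            simp only [Finset.mem_Icc] at hk
            have hk2 : (2:ℝ) ≤ (k:ℝ) := by exact_mod_cast (by omega : 2 ≤ k)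
            have h1 : (1/lam) * (1/((k:ℝ)-1) - 1/(k:ℝ)) = (lam * (((k:ℝ)-1)*k))⁻¹ := by
              rw [div_sub_div _ _ (by linarith) (by linarith)]
              field_simp
              ring
            have h3 : (0:ℝ) < ((k:ℝ) - 1) * k := by nlinarith
            rw [h1, inv_le_inv₀ (by positivity) (mul_pos hlam h3)]
            nlinarith [mul_pos hlam h3, hlam.le, sq_nonneg ((k:ℝ))]
          calc ∑ k ∈ Finset.Icc (K₀+1) n, (1 + lam * (k:ℝ)^2)⁻¹
              ≤ ∑ k ∈ Finset.Icc (K₀+1) n, (1/lam) * (1/((k:ℝ)-1) - 1/(k:ℝ)) :=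
                Finset.sum_le_sum hterm
            _ = (1/lam) * ∑ k ∈ Finset.Icc (K₀+1) n, (1/((k:ℝ)-1) - 1/(k:ℝ)) := by
                rw [Finset.mul_sum]
            _ ≤ (1/lam) * (1/(K₀:ℝ)) := by
                apply mul_le_mul_of_nonneg_left ?_ (by positivity)
                rw [show Finset.Icc (K₀+1) n = Finset.Ico (K₀+1) (n+1) by rw [Finset.Ico_add_one_right_eq_Icc],
                  Finset.sum_Ico_eq_sum_range]
                have hrw : ∀ i ∈ Finset.range (n + 1 - (K₀+1)),
                    1/(((K₀+1+i:ℕ):ℝ) - 1) - 1/((K₀+1+i:ℕ):ℝ)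
                    = (fun j => 1/((K₀+j:ℕ):ℝ)) i - (fun j => 1/((K₀+j:ℕ):ℝ)) (i+1) := by
                  intro i _
                  show _ = 1/((K₀+i:ℕ):ℝ) - 1/((K₀+(i+1):ℕ):ℝ)
                  congr 2 <;> push_cast <;> ring
                rw [Finset.sum_congr rfl hrw, Finset.sum_range_sub']
                have : (0:ℝ) ≤ 1/((K₀ + (n + 1 - (K₀+1)) : ℕ):ℝ) := by positivity
                have h0 : 1/((K₀ + 0 : ℕ):ℝ) = 1/(K₀:ℝ) := by norm_num
                linarith [h0.le]
            _ = 1/(lam * K₀) := by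
                rw [one_div_mul_one_div]

lemma gauss_sum_bound (lam : ℝ) (hlam : 0 < lam) (K K₀ : ℕ) (hK₀ : 1 ≤ K₀) :
    ∑ k ∈ Finset.Icc (-(K:ℤ)) K, Real.exp (-(lam * (k:ℝ)^2))
      ≤ 2 * (1 + (K₀ + 1/(lam*K₀))) := by
  set f : ℤ → ℝ := fun k => Real.exp (-(lam * (k:ℝ)^2)) with hf
  have hfnn : ∀ k, 0 ≤ f k := fun k => (Real.exp_pos _).le
  have hsub : Finset.Icc (-(K:ℤ)) K ⊆ Finset.Icc (-(K:ℤ)) 0 ∪ Finset.Icc 0 K := by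
    intro k hk
    simp only [Finset.mem_Icc, Finset.mem_union] at *
    omega
  have hneg : ∑ k ∈ Finset.Icc (-(K:ℤ)) 0, f k = ∑ k ∈ Finset.Icc (0:ℤ) K, f k := by
    apply Finset.sum_nbij' (i := fun k => -k) (j := fun k => -k)
    · intro a ha; simp only [Finset.mem_Icc] at *; omega
    · intro a ha; simp only [Finset.mem_Icc] at *; omega
    · intro a _; ring
    · intro a _; ring
    · intro a _; simp [hf]
  have hhalf : ∑ k ∈ Finset.Icc (0:ℤ) K, f k
      ≤ 1 + ∑ k ∈ Finset.Icc 1 K, Real.exp (-(lam * (k:ℕ)^2)) := by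
    have hcast : ∑ k ∈ Finset.Icc (0:ℤ) K, f k
        = ∑ k ∈ Finset.Icc (0:ℕ) K, Real.exp (-(lam * (k:ℕ)^2)) := by
      refine Finset.sum_nbij' (fun k => k.toNat) (fun k => (k:ℤ)) ?_ ?_ ?_ ?_ ?_
      · intro a ha; simp only [Finset.mem_Icc] at *; omega
      · intro a ha; simp only [Finset.mem_Icc] at *; omega
      · intro a ha; simp only [Finset.mem_Icc] at ha; omega
      · intro a _; simp
      · intro a ha
        simp only [Finset.mem_Icc] at ha
        have h' : ((a.toNat:ℕ):ℝ) = ((a:ℤ):ℝ) := by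
          exact_mod_cast congrArg (Int.cast : ℤ → ℝ) (Int.toNat_of_nonneg ha.1)
        simp only [hf, h']
    rw [hcast]
    have hins : Finset.Icc (0:ℕ) K = insert 0 (Finset.Icc 1 K) := by
      ext k; simp only [Finset.mem_Icc, Finset.mem_insert]; omega
    rw [hins, Finset.sum_insert (by simp)]
    simp
  have htail : ∑ k ∈ Finset.Icc 1 K, Real.exp (-(lam * ((k:ℕ):ℝ)^2))
      ≤ K₀ + 1/(lam*K₀) := by
    refine le_trans (Finset.sum_le_sum ?_) (tail_lemma lam hlam K₀ hK₀ K)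
    intro k _
    rw [Real.exp_neg]
    apply inv_anti₀ (by positivity)
    linarith [Real.add_one_le_exp (lam * ((k:ℕ):ℝ)^2)]
  calc ∑ k ∈ Finset.Icc (-(K:ℤ)) K, f k
      ≤ (∑ k ∈ Finset.Icc (-(K:ℤ)) 0, f k) + ∑ k ∈ Finset.Icc (0:ℤ) K, f k := by
        have hui := Finset.sum_union_inter (s₁ := Finset.Icc (-(K:ℤ)) 0)
          (s₂ := Finset.Icc (0:ℤ) K) (f := f)
        have h1 : ∑ k ∈ Finset.Icc (-(K:ℤ)) K, f k
            ≤ ∑ k ∈ Finset.Icc (-(K:ℤ)) 0 ∪ Finset.Icc (0:ℤ) K, f k :=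
          Finset.sum_le_sum_of_subset_of_nonneg hsub (fun k _ _ => hfnn k)
        have h2 : 0 ≤ ∑ k ∈ Finset.Icc (-(K:ℤ)) 0 ∩ Finset.Icc (0:ℤ) K, f k :=
          Finset.sum_nonneg fun k _ => hfnn k
        linarith
    _ = 2 * ∑ k ∈ Finset.Icc (0:ℤ) K, f k := by rw [hneg]; ring
    _ ≤ 2 * (1 + (K₀ + 1/(lam*K₀))) := by
        linarith [hhalf, htail]

lemma box_sum (m : ℕ) (K : ℕ) (g : ℤ → ℝ) :
    ∑ p ∈ Fintype.piFinset (fun _ : Fin m => Finset.Icc (-(K:ℤ)) K), ∏ i, g (p i)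
      = (∑ k ∈ Finset.Icc (-(K:ℤ)) K, g k)^m := by
  rw [← Finset.prod_univ_sum]
  simp

lemma sqrt_le_half_add_one {z : ℝ} (hz : 0 ≤ z) : Real.sqrt z ≤ (z+1)/2 := by
  nlinarith [Real.sq_sqrt hz, sq_nonneg (Real.sqrt z - 1)]

end Helpers

set_option maxHeartbeats 1000000 in
/-- **Covering a level set of the LCD.**
Let `c ∈ (0,1)`, `L ≥ 1`, `D₀ ≥ c√m ≥ 1`.  Then the set
`{x ∈ S^{m-1} : D_L(x) ∈ (D₀, 2D₀]}` admits a `β`-net of cardinality at most `(CD₀/√m)^m`,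
where `β = 2L√(log(2D₀))/D₀` and `C` depends only on `c`; the net may be taken inside
`{p/‖p‖₂ : p ∈ ℤᵐ ∩ 4D₀ B₂ᵐ, p ≠ 0}`. -/
theorem net_for_lcd_level_set (c : ℝ) (hc0 : 0 < c) (hc1 : c < 1) :
    ∃ C : ℝ, 0 < C ∧
      ∀ (m : ℕ) (L D₀ : ℝ), 1 ≤ L → 1 ≤ c * Real.sqrt m → c * Real.sqrt m ≤ D₀ →
        ∃ N : Finset (Fin m → ℝ),
          (∀ y ∈ N, ∃ p : Fin m → ℤ, p ≠ 0 ∧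
            euclidNorm (fun i => (p i : ℝ)) ≤ 4 * D₀ ∧
            y = fun i => (p i : ℝ) / euclidNorm (fun j => (p j : ℝ))) ∧
          (∀ x : Fin m → ℝ, euclidNorm x = 1 →
            ENNReal.ofReal D₀ < LCD L x → LCD L x ≤ ENNReal.ofReal (2 * D₀) →
            ∃ y ∈ N, euclidNorm (x - y) ≤ 2 * L * Real.sqrt (Real.log (2 * D₀)) / D₀) ∧
          (N.card : ℝ) ≤ (C * D₀ / Real.sqrt m) ^ m := by
  classical
  refine ⟨48 + 12/c, by positivity, ?_⟩
  intro m L D₀ hL hcm hcD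
  have hsm : (0:ℝ) < Real.sqrt m := by
    rcases le_or_gt (Real.sqrt m) 0 with h | h
    · nlinarith
    · exact h
  have hD1 : (1:ℝ) ≤ D₀ := hcm.trans hcD
  have hD0 : (0:ℝ) < D₀ := by linarith
  have hL0 : (0:ℝ) < L := by linarith
  have hm1 : 1 ≤ m := by
    by_contra h
    push_neg at h
    interval_cases m
    simp at hsm
  set K : ℕ := ⌈4*D₀⌉₊ with hK
  set Box : Finset (Fin m → ℤ) :=
    Fintype.piFinset (fun _ : Fin m => Finset.Icc (-(K:ℤ)) K) with hBox
  set S : Finset (Fin m → ℤ) :=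
    Box.filter (fun p => p ≠ 0 ∧ euclidNorm (fun i => ((p i : ℤ) : ℝ)) ≤ 4*D₀) with hS
  set N : Finset (Fin m → ℝ) :=
    S.image (fun p => fun i => (p i : ℝ) / euclidNorm (fun j => (p j : ℝ))) with hN
  refine ⟨N, ?_, ?_, ?_⟩
  · -- membership description
    intro y hy
    obtain ⟨p, hpS, rfl⟩ := Finset.mem_image.mp hy
    rw [hS, Finset.mem_filter] at hpS
    exact ⟨p, hpS.2.1, hpS.2.2, rfl⟩
  · -- covering property
    intro x hx1 h1 h2
    -- extract a witness t
    have h2' : LCD L x < ENNReal.ofReal (5/2 * D₀) :=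
      lt_of_le_of_lt h2 (by rw [ENNReal.ofReal_lt_ofReal_iff (by positivity)]; linarith)
    rw [LCD] at h2'
    obtain ⟨θ, hθmem, hθlt⟩ := sInf_lt_iff.mp h2'
    obtain ⟨t, ht0, hθeq, hdist⟩ := hθmem
    subst hθeq
    have ht52 : t < 5/2 * D₀ := (ENNReal.ofReal_lt_ofReal_iff (by positivity)).mp hθlt
    have hle : LCD L x ≤ ENNReal.ofReal t := by
      rw [LCD]
      exact sInf_le ⟨t, ht0, rfl, hdist⟩
    have htD : D₀ < t := (ENNReal.ofReal_lt_ofReal_iff ht0).mp (h1.trans_le hle)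
    -- basic facts about the witness
    have hd0 : 0 ≤ distToLattice (t • x) := by
      rw [distToLattice]
      apply Real.sInf_nonneg
      rintro r ⟨p, rfl⟩
      exact en_nonneg _
    have hb0 : 0 < L * Real.sqrt (max (Real.log (t / L)) 0) := lt_of_le_of_lt hd0 hdist
    have hsqrt0 : 0 < Real.sqrt (max (Real.log (t / L)) 0) := by
      rcases le_or_gt (Real.sqrt (max (Real.log (t / L)) 0)) 0 with h | h
      · nlinarith
      · exact h
    have hmax0 : 0 < max (Real.log (t / L)) 0 := Real.sqrt_pos.mp hsqrt0
    have hlogpos : 0 < Real.log (t / L) := by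
      rcases le_or_gt (Real.log (t / L)) 0 with h | h
      · rw [max_eq_right h] at hmax0; exact absurd hmax0 (lt_irrefl 0)
      · exact h
    have htL : L < t := by
      have h1' : 1 < t / L := by
        by_contra h
        push_neg at h
        have : Real.log (t / L) ≤ 0 := Real.log_nonpos (by positivity) h
        linarith
      calc L = L * 1 := (mul_one L).symm
        _ < L * (t / L) := by apply mul_lt_mul_of_pos_left h1' hL0
        _ = t := by field_simp
    have hmaxeq : max (Real.log (t / L)) 0 = Real.log (t / L) := max_eq_left hlogpos.le
    -- bound the allowed distance by t/2
    have hb_le : L * Real.sqrt (max (Real.log (t / L)) 0) ≤ t / 2 := by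
      rw [hmaxeq]
      have hlog_le : Real.log (t / L) ≤ t / L - 1 :=
        Real.log_le_sub_one_of_pos (by positivity)
      have := sqrt_le_half_add_one hlogpos.le
      calc L * Real.sqrt (Real.log (t / L)) ≤ L * ((Real.log (t/L) + 1)/2) := by
            apply mul_le_mul_of_nonneg_left this hL0.le
        _ ≤ L * ((t/L - 1 + 1)/2) := by
            apply mul_le_mul_of_nonneg_left _ hL0.le
            linarith
        _ = t / 2 := by field_simp; ring
    -- extract the lattice point
    rw [distToLattice] at hdist
    have hbdd : BddBelow {r | ∃ p : Fin m → ℤ, r = euclidNorm (fun i => (t • x) i - (p i : ℝ))} :=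
      ⟨0, by rintro r ⟨p, rfl⟩; exact en_nonneg _⟩
    have hne : Set.Nonempty {r | ∃ p : Fin m → ℤ, r = euclidNorm (fun i => (t • x) i - (p i : ℝ))} :=
      ⟨_, ⟨0, rfl⟩⟩
    have hdist' := (csInf_lt_iff hbdd hne).mp hdist
    obtain ⟨r, ⟨p, rfl⟩, hp⟩ := hdist'
    set u : Fin m → ℝ := fun i => (p i : ℝ) with hu
    have hsub_eq : (fun i => (t • x) i - (p i : ℝ)) = t • x - u := rfl
    rw [hsub_eq] at hp
    set d : ℝ := euclidNorm (t • x - u) with hd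
    have htx : euclidNorm (t • x) = t := by
      rw [en_smul, hx1, mul_one, abs_of_pos ht0]
    have hd_lt : d < t / 2 := hp.trans_le hb_le
    have hd_nonneg : 0 ≤ d := en_nonneg _
    set np : ℝ := euclidNorm u with hnp
    have habs : |np - t| ≤ d := by
      have h := abs_en_sub_en u (t • x)
      rw [htx] at h
      have : u - t • x = -(t • x - u) := by ring
      rw [this, en_neg] at h
      exact h
    have hnp_lb : t - d ≤ np := by
      rcases abs_le.mp habs with ⟨h', _⟩
      linarith
    have hnp_ub : np ≤ t + d := by
      rcases abs_le.mp habs with ⟨_, h'⟩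
      linarith
    have hnp_pos : 0 < np := by linarith
    have hnp_le : np ≤ 4 * D₀ := by nlinarith
    have hp_ne : p ≠ 0 := by
      intro h
      have : np = 0 := by
        rw [hnp, hu, h]
        simp [euclidNorm]
      linarith
    -- p is in S
    have hpBox : p ∈ Box := by
      rw [hBox, Fintype.mem_piFinset]
      intro i
      have hco : |u i| ≤ np := abs_coord_le u i
      have h4K : (4:ℝ) * D₀ ≤ (K:ℝ) := Nat.le_ceil _
      have : |(p i : ℝ)| ≤ (K:ℝ) := by
        rw [hu] at hco
        simp only at hco
        linarith
      rcases abs_le.mp this with ⟨hlo, hhi⟩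
      simp only [Finset.mem_Icc]
      constructor
      · exact_mod_cast hlo
      · exact_mod_cast hhi
    have hpS : p ∈ S := by
      rw [hS, Finset.mem_filter]
      exact ⟨hpBox, hp_ne, hnp_le⟩
    refine ⟨fun i => (p i : ℝ) / euclidNorm (fun j => (p j : ℝ)), Finset.mem_image_of_mem _ hpS, ?_⟩
    -- distance bound
    have hkey : x - (fun i => (p i : ℝ) / euclidNorm (fun j => (p j : ℝ)))
        = (t⁻¹ • (t • x - u)) + ((t⁻¹ - np⁻¹) • u) := by
      funext i
      simp only [Pi.sub_apply, Pi.add_apply, Pi.smul_apply, smul_eq_mul]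
      have : euclidNorm (fun j => (p j : ℝ)) = np := rfl
      rw [this]
      field_simp
      ring
    have hen1 : euclidNorm (t⁻¹ • (t • x - u)) = d / t := by
      rw [en_smul, ← hd, abs_of_pos (by positivity)]
      field_simp
    have hen2 : euclidNorm ((t⁻¹ - np⁻¹) • u) ≤ d / t := by
      rw [en_smul, ← hnp]
      have heq : |t⁻¹ - np⁻¹| * np = |np - t| / t := by
        rw [show t⁻¹ - np⁻¹ = (np - t)/(np * t) by
          rw [inv_eq_one_div, inv_eq_one_div, div_sub_div _ _ ht0.ne' hnp_pos.ne',
            one_mul, mul_one, mul_comm t np]]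
        rw [abs_div, abs_of_pos (by positivity : (0:ℝ) < np * t)]
        field_simp [hnp_pos.ne', ht0.ne']
      rw [heq]
      gcongr
    have hdb : d ≤ L * Real.sqrt (Real.log t) := by
      calc d ≤ L * Real.sqrt (max (Real.log (t/L)) 0) := hp.le
        _ ≤ L * Real.sqrt (Real.log t) := by
            apply mul_le_mul_of_nonneg_left _ hL0.le
            apply Real.sqrt_le_sqrt
            rw [hmaxeq]
            exact Real.log_le_log (by positivity) (div_le_self ht0.le hL)
    have hratio : Real.sqrt (Real.log t) / t ≤ Real.sqrt (Real.log (2*D₀)) / D₀ := by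
      rcases le_or_gt t (2*D₀) with hcase | hcase
      · apply div_le_div₀ (Real.sqrt_nonneg _) ?_ hD0 htD.le
        exact Real.sqrt_le_sqrt (Real.log_le_log ht0 hcase)
      · have hlog2 : (0:ℝ) ≤ Real.log (2*D₀) := Real.log_nonneg (by linarith)
        have hlogt : Real.log t ≤ 2 * Real.log (2*D₀) := by
          have e1 : Real.log t ≤ Real.log (5/2*D₀) := Real.log_le_log ht0 ht52.le
          have e2 : Real.log (5/2*D₀) = Real.log (2*D₀) + Real.log (5/4) := by
            rw [show (5/2*D₀ : ℝ) = (2*D₀)*(5/4) by ring,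
              Real.log_mul (by positivity) (by norm_num)]
          have e3 : Real.log (5/4 : ℝ) ≤ Real.log 2 := Real.log_le_log (by norm_num) (by norm_num)
          have e4 : Real.log 2 ≤ Real.log (2*D₀) := Real.log_le_log (by norm_num) (by linarith)
          linarith
        have hsq : Real.sqrt (Real.log t) ≤ 2 * Real.sqrt (Real.log (2*D₀)) := by
          have h5 : Real.sqrt (Real.log t) ≤ Real.sqrt ((2:ℝ)^2 * Real.log (2*D₀)) :=
            Real.sqrt_le_sqrt (by nlinarith)
          rwa [Real.sqrt_mul (by positivity) _, Real.sqrt_sq (by norm_num)] at h5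
        calc Real.sqrt (Real.log t) / t ≤ (2*Real.sqrt (Real.log (2*D₀))) / (2*D₀) :=
              div_le_div₀ (by positivity) hsq (by positivity) hcase.le
          _ = Real.sqrt (Real.log (2*D₀)) / D₀ := by
              rw [mul_div_mul_left _ _ (two_ne_zero)]
    calc euclidNorm (x - fun i => (p i : ℝ) / euclidNorm (fun j => (p j : ℝ)))
        ≤ euclidNorm (t⁻¹ • (t • x - u)) + euclidNorm ((t⁻¹ - np⁻¹) • u) := by
          rw [hkey]; exact en_add_le _ _
      _ ≤ d/t + d/t := by rw [hen1]; linarith [hen2]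
      _ = 2 * (d/t) := by ring
      _ ≤ 2 * ((L * Real.sqrt (Real.log t))/t) := by gcongr
      _ = 2 * L * (Real.sqrt (Real.log t)/t) := by ring
      _ ≤ 2 * L * (Real.sqrt (Real.log (2*D₀))/D₀) := by
          apply mul_le_mul_of_nonneg_left hratio (by positivity)
      _ = 2 * L * Real.sqrt (Real.log (2 * D₀)) / D₀ := by ring
  · -- cardinality bound
    have hmR : (0:ℝ) < m := by exact_mod_cast hm1
    have hcard_im : (N.card : ℝ) ≤ (S.card : ℝ) := by
      exact_mod_cast Finset.card_image_le
    set R : ℝ := 4 * D₀ with hRdef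
    have hR0 : 0 < R := by positivity
    set lam : ℝ := m / R^2 with hlamdef
    have hlam : 0 < lam := by positivity
    set s : ℝ := R / Real.sqrt m with hsdef
    have hs0 : 0 < s := by positivity
    set K₀ : ℕ := ⌈s⌉₊ with hK₀def
    have hK₀1 : 1 ≤ K₀ := Nat.one_le_ceil_iff.mpr hs0
    have hK₀R : (0:ℝ) < K₀ := by exact_mod_cast hK₀1
    have hSQ : ∀ p ∈ S, ∑ i, ((p i : ℝ))^2 ≤ R^2 := by
      intro p hpS
      have h := (Finset.mem_filter.mp hpS).2.2
      have hQnn : 0 ≤ ∑ i, ((p i:ℝ))^2 := Finset.sum_nonneg fun i _ => sq_nonneg _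
      have hen : euclidNorm (fun i => ((p i : ℤ):ℝ)) = Real.sqrt (∑ i, ((p i:ℝ))^2) := rfl
      rw [hen] at h
      nlinarith [Real.sq_sqrt hQnn, Real.sqrt_nonneg (∑ i, ((p i:ℝ))^2)]
    have hterm_eq : ∀ p : Fin m → ℤ, Real.exp (lam * (R^2 - ∑ i, ((p i:ℝ))^2))
        = Real.exp (lam * R^2) * ∏ i, Real.exp (-(lam * ((p i:ℝ))^2)) := by
      intro p
      rw [← Real.exp_sum, ← Real.exp_add]
      congr 1
      rw [show ∑ i, -(lam * ((p i:ℝ))^2) = -(lam * ∑ i, ((p i:ℝ))^2) by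
        rw [Finset.mul_sum, ← Finset.sum_neg_distrib]]
      ring
    have hstep : (S.card : ℝ) ≤ Real.exp (lam * R^2)
        * (∑ k ∈ Finset.Icc (-(K:ℤ)) K, Real.exp (-(lam * (k:ℝ)^2)))^m := by
      calc (S.card : ℝ) = ∑ _p ∈ S, (1:ℝ) := by simp
        _ ≤ ∑ p ∈ S, Real.exp (lam * (R^2 - ∑ i, ((p i:ℝ))^2)) := by
            apply Finset.sum_le_sum
            intro p hpS
            apply Real.one_le_exp
            have := hSQ p hpS
            nlinarith
        _ ≤ ∑ p ∈ Box, Real.exp (lam * (R^2 - ∑ i, ((p i:ℝ))^2)) := by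
            apply Finset.sum_le_sum_of_subset_of_nonneg (Finset.filter_subset _ _)
            intro p _ _
            exact (Real.exp_pos _).le
        _ = ∑ p ∈ Box, Real.exp (lam * R^2) * ∏ i, Real.exp (-(lam * ((p i:ℝ))^2)) := by
            exact Finset.sum_congr rfl fun p _ => hterm_eq p
        _ = Real.exp (lam * R^2) * ∑ p ∈ Box, ∏ i, Real.exp (-(lam * ((p i:ℝ))^2)) := by
            rw [Finset.mul_sum]
        _ = Real.exp (lam * R^2)
            * (∑ k ∈ Finset.Icc (-(K:ℤ)) K, Real.exp (-(lam * (k:ℝ)^2)))^m := by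
            rw [hBox, box_sum m K (fun k => Real.exp (-(lam * (k:ℝ)^2)))]
    have hlamR : lam * R^2 = m := by
      rw [hlamdef]
      field_simp
    have hs4c : 4*c ≤ s := by
      rw [hsdef, hRdef, le_div_iff₀ hsm]
      nlinarith
    have hsig : (∑ k ∈ Finset.Icc (-(K:ℤ)) K, Real.exp (-(lam * (k:ℝ)^2)))
        ≤ (1/c + 4) * s := by
      have hg := gauss_sum_bound lam hlam K K₀ hK₀1
      have hceil : (K₀:ℝ) < s + 1 := Nat.ceil_lt_add_one hs0.le
      have hinv : 1/(lam*K₀) ≤ s := by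
        have hK₀s : s ≤ (K₀:ℝ) := Nat.le_ceil s
        have hls : lam * s = 1/s := by
          rw [hlamdef, hsdef, hRdef]
          have hsq : Real.sqrt m * Real.sqrt m = m := Real.mul_self_sqrt hmR.le
          field_simp
          nlinarith [hsq]
        have h1 : 1/s ≤ lam * K₀ := by
          rw [← hls]
          exact mul_le_mul_of_nonneg_left hK₀s hlam.le
        have h2 : (0:ℝ) < 1/s := by positivity
        calc 1/(lam*K₀) ≤ 1/(1/s) := by
              apply one_div_le_one_div_of_le h2 h1
          _ = s := one_div_one_div s
      have hone : (1:ℝ) ≤ s/(4*c) := by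
        rw [le_div_iff₀ (by positivity)]
        linarith
      have hc4 : (4:ℝ) ≤ s/c := by
        rw [le_div_iff₀ hc0]
        linarith
      calc (∑ k ∈ Finset.Icc (-(K:ℤ)) K, Real.exp (-(lam * (k:ℝ)^2)))
          ≤ 2 * (1 + ((K₀:ℝ) + 1/(lam*K₀))) := hg
        _ ≤ 2 * (1 + ((s+1) + s)) := by
            have := hceil.le
            have := hinv
            linarith
        _ = 4 + 4*s := by ring
        _ ≤ (1/c + 4) * s := by
            have h4 : (4:ℝ) ≤ (1/c) * s := by
              rw [one_div, inv_mul_eq_div]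
              exact hc4
            linarith
    have hsig_nn : (0:ℝ) ≤ ∑ k ∈ Finset.Icc (-(K:ℤ)) K, Real.exp (-(lam * (k:ℝ)^2)) :=
      Finset.sum_nonneg fun k _ => (Real.exp_pos _).le
    have hfinal : Real.exp 1 * ((1/c + 4) * s) ≤ (48 + 12/c) * D₀ / Real.sqrt m := by
      have he : Real.exp 1 ≤ 2.72 := by
        have := Real.exp_one_lt_d9
        nlinarith
      have hseq : s = 4 * (D₀ / Real.sqrt m) := by
        rw [hsdef, hRdef]; ring
      have hu : (0:ℝ) < D₀ / Real.sqrt m := by positivity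
      have hv : (0:ℝ) < (1/c) * (D₀ / Real.sqrt m) := by positivity
      have t1 : Real.exp 1 * ((1/c) * (D₀ / Real.sqrt m)) ≤ 2.72 * ((1/c) * (D₀ / Real.sqrt m)) :=
        mul_le_mul_of_nonneg_right he hv.le
      have t2 : Real.exp 1 * (D₀ / Real.sqrt m) ≤ 2.72 * (D₀ / Real.sqrt m) :=
        mul_le_mul_of_nonneg_right he hu.le
      have hLeq : Real.exp 1 * ((1/c + 4) * (4 * (D₀ / Real.sqrt m)))
          = 4*(Real.exp 1 * ((1/c) * (D₀ / Real.sqrt m)))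
            + 16*(Real.exp 1 * (D₀ / Real.sqrt m)) := by ring
      have hReq : (48 + 12/c) * D₀ / Real.sqrt m
          = 12*((1/c) * (D₀ / Real.sqrt m)) + 48*(D₀ / Real.sqrt m) := by ring
      rw [hseq, hLeq, hReq]
      linarith
    calc (N.card : ℝ) ≤ (S.card : ℝ) := hcard_im
      _ ≤ Real.exp (lam * R^2)
          * (∑ k ∈ Finset.Icc (-(K:ℤ)) K, Real.exp (-(lam * (k:ℝ)^2)))^m := hstep
      _ ≤ Real.exp 1 ^ m * ((1/c + 4) * s)^m := by
          apply mul_le_mul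
          · rw [hlamR, ← Real.exp_one_pow]
          · exact pow_le_pow_left₀ hsig_nn hsig m
          · positivity
          · positivity
      _ = (Real.exp 1 * ((1/c + 4) * s))^m := (mul_pow _ _ _).symm
      _ ≤ ((48 + 12/c) * D₀ / Real.sqrt m)^m := by
          apply pow_le_pow_left₀ (by positivity) hfinal
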